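/- arXiv:2210.13036 — 3 statements merged into one kernel-verified Lean document; each statement's English description precedes it below -/
import Mathlib

section
/- Let p ∈ MAX, let (c1,c2,c3) be any ordering of triple(p) and let q ∈ Touch_p. If RC(p,q,(c1,c2,c3)) is called, then every path in R(q) receives label c1 (L(R(q)) = {c1}) and every path in L(q) receives a label in {c1,c2} (L(L(q)) ⊆ {c1,c2}). -/
open SimpleGraph

/-- An abstract *binary set of non-crossing shortest paths* (BNCS) in a plane graph.
The fixed planar embedding is abstracted by: edge lengths, the predicate `OuterVertex`
selecting the vertices on the external face, an abstract crossing relation on walks,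
the genealogy partial order `le` (`p ⪯ q` iff `γ_p ⊆ γ_q`), the binary genealogy tree
(`rightChild`, `leftChild`, `parent`, rooted at `root`, every path having zero or two
children), and an abstract type `F` of faces of the union `U = ⋃ p` together with the
boundary `bd f` of each face, its upper path `up f` (the ⪯-minimum path whose interior
contains `f`) and the extremal edges `er f`, `el f` of the lower boundary of `f`,
lying on the right and on the left child of `up f` respectively.  For a non-root path
`m`, `faceOf m` is the face whose upper path is the parent of `m` and `se m` is the
extremal edge of the lower boundary of `faceOf m` belonging to `m`. -/
structure Bncs where
  V : Type
  G : SimpleGraph V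
  len : Sym2 V → ℝ
  OuterVertex : V → Prop
  Crosses : ((u : V) × (v : V) × G.Walk u v) → ((u : V) × (v : V) × G.Walk u v) → Prop
  P : Type
  walk : P → (u : V) × (v : V) × G.Walk u v
  walk_isPath : ∀ p, (walk p).2.2.IsPath
  walk_shortest : ∀ p, ∀ w : G.Walk (walk p).1 (walk p).2.1,
      ((walk p).2.2.edges.map len).sum ≤ (w.edges.map len).sum
  endpoints_outer : ∀ p, OuterVertex (walk p).1 ∧ OuterVertex (walk p).2.1
  single_touch : ∀ p q : P,
      ((walk p).2.2.toSubgraph ⊓ (walk q).2.2.toSubgraph).verts = ∅ ∨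
      ∃ (a b : V) (w : G.Walk a b), w.IsPath ∧
        w.toSubgraph = (walk p).2.2.toSubgraph ⊓ (walk q).2.2.toSubgraph
  non_crossing : ∀ p q : P, ¬ Crosses (walk p) (walk q)
  -- the genealogy partial order ⪯
  le : P → P → Prop
  le_refl : ∀ p, le p p
  le_trans : ∀ p q r, le p q → le q r → le p r
  le_antisymm : ∀ p q, le p q → le q p → p = q
  root : P
  le_root : ∀ p, le p root
  -- the binary genealogy tree (transitive reduction of ⪯)
  rightChild : P → Option P
  leftChild : P → Option P
  two_or_zero : ∀ p, (rightChild p).isSome ↔ (leftChild p).isSome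
  children_ne : ∀ p c, rightChild p = some c → leftChild p ≠ some c
  child_le : ∀ p c, (rightChild p = some c ∨ leftChild p = some c) → le c p ∧ c ≠ p
  child_cov : ∀ p c q, (rightChild p = some c ∨ leftChild p = some c) →
      le c q → le q p → q = c ∨ q = p
  parent : P → Option P
  parent_root : parent root = none
  parent_spec : ∀ c q, parent c = some q ↔ (rightChild q = some c ∨ leftChild q = some c)
  -- faces of U = ⋃_{p} p
  F : Type
  bd : F → G.Subgraph
  bd_le_union : ∀ f, bd f ≤ ⨆ p : P, (walk p).2.2.toSubgraph
  up : F → P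
  er : F → Sym2 V
  el : F → Sym2 V
  er_mem_bd : ∀ f, er f ∈ (bd f).edgeSet
  el_mem_bd : ∀ f, el f ∈ (bd f).edgeSet
  er_mem_child : ∀ f c, rightChild (up f) = some c → er f ∈ (walk c).2.2.edges
  el_mem_child : ∀ f c, leftChild (up f) = some c → el f ∈ (walk c).2.2.edges
  -- a path with two children bounds a face together with them
  face_children : ∀ q cr cl, rightChild q = some cr → leftChild q = some cl →
      ∃ f, up f = q ∧ bd f ≤
        (walk q).2.2.toSubgraph ⊔ (walk cr).2.2.toSubgraph ⊔ (walk cl).2.2.toSubgraph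
  -- the face f_m associated with a non-root path m, and the special edge se^m
  faceOf : P → F
  faceOf_spec : ∀ m q, parent m = some q → up (faceOf m) = q
  se : P → Sym2 V
  se_mem : ∀ p, se p ∈ (walk p).2.2.edges
  se_spec : ∀ m, m ≠ root → se m = er (faceOf m) ∨ se m = el (faceOf m)

namespace Bncs

/-- The edges of the path `q`. -/
def edgesOf (B : Bncs) (q : B.P) : List (Sym2 B.V) := (B.walk q).2.2.edges

/-- The vertices of the path `q`. -/
def supp (B : Bncs) (q : B.P) : List B.V := (B.walk q).2.2.support

/-- The path `q` as a subgraph. -/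
def sub (B : Bncs) (q : B.P) : B.G.Subgraph := (B.walk q).2.2.toSubgraph

/-- `Touch_p`: the paths `q ⪯ p` sharing at least one vertex with `p`. -/
def Touch (B : Bncs) (p : B.P) : Set B.P :=
  {q | B.le q p ∧ ∃ v, v ∈ B.supp q ∧ v ∈ B.supp p}

/-- `Max_p`: the ⪯-maximal elements of `{q : q ⪯ p} \ Touch_p`. -/
def MaxS (B : Bncs) (p : B.P) : Set B.P :=
  {q | B.le q p ∧ q ∉ B.Touch p ∧ ∀ r, B.le r p → r ∉ B.Touch p → B.le q r → q = r}

/-- The levels `MAX_i`:  `MAX_0 = {p1}`, `TOUCH_i = ⋃_{m ∈ MAX_{i-1}} Touch_m` and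
`MAX_i = ⋃_{p ∈ TOUCH_{i-1}} Max_p`. -/
def MAXlevel (B : Bncs) : ℕ → Set B.P
  | 0 => {B.root}
  | i + 1 => ⋃ m ∈ B.MAXlevel i, ⋃ q ∈ B.Touch m, B.MaxS q

/-- `MAX = ⋃_i MAX_i`. -/
def MAXset (B : Bncs) : Set B.P := ⋃ i, B.MAXlevel i

/-- A face of `Touch_p ∪ Max_p` is of type I for `p` if both children of its upper
path lie in `Touch_p`. -/
def TypeI (B : Bncs) (p : B.P) (f : B.F) : Prop :=
  B.up f ∈ B.Touch p ∧ ∃ cr cl, B.rightChild (B.up f) = some cr ∧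
    B.leftChild (B.up f) = some cl ∧ cr ∈ B.Touch p ∧ cl ∈ B.Touch p

/-- A face of `Touch_p ∪ Max_p` is of type II for `p` if both children of its upper
path lie in `Max_p`. -/
def TypeII (B : Bncs) (p : B.P) (f : B.F) : Prop :=
  B.up f ∈ B.Touch p ∧ ∃ cr cl, B.rightChild (B.up f) = some cr ∧
    B.leftChild (B.up f) = some cl ∧ cr ∈ B.MaxS p ∧ cl ∈ B.MaxS p

/-- A face of `Touch_p ∪ Max_p` is of type III for `p` if one child of its upper path
lies in `Touch_p` and the other in `Max_p`. -/
def TypeIII (B : Bncs) (p : B.P) (f : B.F) : Prop :=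
  B.up f ∈ B.Touch p ∧ ∃ cr cl, B.rightChild (B.up f) = some cr ∧
    B.leftChild (B.up f) = some cl ∧
    ((cr ∈ B.Touch p ∧ cl ∈ B.MaxS p) ∨ (cr ∈ B.MaxS p ∧ cl ∈ B.Touch p))

/-- `q` interferes with the face `f` if `q` contains `e^f_r` or `e^f_ℓ`. -/
def Interferes (B : Bncs) (q : B.P) (f : B.F) : Prop :=
  B.er f ∈ B.edgesOf q ∨ B.el f ∈ B.edgesOf q

/-- `m ⇢ m'` iff `m` interferes with `f_{m'}`. -/
def Dash (B : Bncs) (m m' : B.P) : Prop := B.Interferes m (B.faceOf m')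

/-- `Max_p^{III}`: the elements `m` of `Max_p` such that `f_m` is of type III for `p`. -/
def MaxIII (B : Bncs) (p : B.P) : Set B.P :=
  {m | m ∈ B.MaxS p ∧ B.TypeIII p (B.faceOf m)}

/-- The relation `⇢` restricted to `Max_p^{III}`. -/
def DashIn (B : Bncs) (p : B.P) (a b : B.P) : Prop :=
  a ∈ B.MaxIII p ∧ b ∈ B.MaxIII p ∧ B.Dash a b

/-- `a` and `b` lie in the same tree of the forest `(Max_p^{III}, ⇢)`. -/
def SameTree (B : Bncs) (p : B.P) : B.P → B.P → Prop :=
  Relation.ReflTransGen (fun a b => B.DashIn p a b ∨ B.DashIn p b a)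

/-- `q` has exactly one child in `Touch_p`, namely `q'`. -/
def OneChildTouch (B : Bncs) (p q q' : B.P) : Prop :=
  (B.rightChild q = some q' ∧ q' ∈ B.Touch p ∧
      ∀ c, B.leftChild q = some c → c ∉ B.Touch p) ∨
  (B.leftChild q = some q' ∧ q' ∈ B.Touch p ∧
      ∀ c, B.rightChild q = some c → c ∉ B.Touch p)

/-- `q` has two children in `Touch_p`: the right child `qr` and the left child `ql`. -/
def TwoChildTouch (B : Bncs) (p q qr ql : B.P) : Prop :=
  B.rightChild q = some qr ∧ B.leftChild q = some ql ∧ qr ∈ B.Touch p ∧ ql ∈ B.Touch p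

/-- `R^p(q)`: the nodes on the path in `TreeTouch_p` from `q` to the rightmost leaf of
the subtree of `TreeTouch_p` rooted at `q`. -/
inductive Rdesc (B : Bncs) (p : B.P) : B.P → B.P → Prop
  | refl (q : B.P) : Rdesc B p q q
  | one {q q' r : B.P} : B.OneChildTouch p q q' → Rdesc B p q' r → Rdesc B p q r
  | two {q qr ql r : B.P} : B.TwoChildTouch p q qr ql → Rdesc B p qr r → Rdesc B p q r

/-- `L^p(q)`: the nodes on the path in `TreeTouch_p` from `q` to the leftmost leaf of
the subtree of `TreeTouch_p` rooted at `q`. -/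
inductive Ldesc (B : Bncs) (p : B.P) : B.P → B.P → Prop
  | refl (q : B.P) : Ldesc B p q q
  | one {q q' r : B.P} : B.OneChildTouch p q q' → Ldesc B p q' r → Ldesc B p q r
  | two {q qr ql r : B.P} : B.TwoChildTouch p q qr ql → Ldesc B p ql r → Ldesc B p q r

/-- `RCrun B p q c₁ c₂ c₃ r c` holds iff during the execution of `RC(p,q,(c₁,c₂,c₃))`
the path `r` receives the label `c`. -/
inductive RCrun (B : Bncs) (p : B.P) : B.P → ℕ → ℕ → ℕ → B.P → ℕ → Prop
  | base (q : B.P) (c₁ c₂ c₃ : ℕ) : RCrun B p q c₁ c₂ c₃ q c₁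
  | one {q q' : B.P} {c₁ c₂ c₃ : ℕ} {r : B.P} {c : ℕ} :
      B.OneChildTouch p q q' → RCrun B p q' c₁ c₂ c₃ r c → RCrun B p q c₁ c₂ c₃ r c
  | right {q qr ql : B.P} {c₁ c₂ c₃ : ℕ} {r : B.P} {c : ℕ} :
      B.TwoChildTouch p q qr ql → RCrun B p qr c₁ c₃ c₂ r c → RCrun B p q c₁ c₂ c₃ r c
  | left {q qr ql : B.P} {c₁ c₂ c₃ : ℕ} {r : B.P} {c : ℕ} :
      B.TwoChildTouch p q qr ql → RCrun B p ql c₂ c₁ c₃ r c → RCrun B p q c₁ c₂ c₃ r c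

/-- `LCrun B p q c₁ c₂ c₃ r c` holds iff during the execution of `LC(p,q,(c₁,c₂,c₃))`
the path `r` receives the label `c`. -/
inductive LCrun (B : Bncs) (p : B.P) : B.P → ℕ → ℕ → ℕ → B.P → ℕ → Prop
  | base (q : B.P) (c₁ c₂ c₃ : ℕ) : LCrun B p q c₁ c₂ c₃ q c₁
  | one {q q' : B.P} {c₁ c₂ c₃ : ℕ} {r : B.P} {c : ℕ} :
      B.OneChildTouch p q q' → LCrun B p q' c₁ c₂ c₃ r c → LCrun B p q c₁ c₂ c₃ r c
  | left {q qr ql : B.P} {c₁ c₂ c₃ : ℕ} {r : B.P} {c : ℕ} :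
      B.TwoChildTouch p q qr ql → LCrun B p ql c₁ c₃ c₂ r c → LCrun B p q c₁ c₂ c₃ r c
  | right {q qr ql : B.P} {c₁ c₂ c₃ : ℕ} {r : B.P} {c : ℕ} :
      B.TwoChildTouch p q qr ql → LCrun B p qr c₂ c₁ c₃ r c → LCrun B p q c₁ c₂ c₃ r c

/-- `SCrun B p T s q cr cl r c` holds iff during the execution of `SC(p,q,(cr,cl))` —
where `T = triple(p)` and `s = scc(p)` — the path `r` receives the label `c`. -/
inductive SCrun (B : Bncs) (p : B.P) (T : Finset ℕ) (s : ℕ) :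
    B.P → ℕ → ℕ → B.P → ℕ → Prop
  | base (q : B.P) (cr cl : ℕ) : SCrun B p T s q cr cl q s
  | one {q q' : B.P} {cr cl : ℕ} {r : B.P} {c : ℕ} :
      B.OneChildTouch p q q' → SCrun B p T s q' cr cl r c → SCrun B p T s q cr cl r c
  | two_right_sc {q qr ql : B.P} {cr cl t : ℕ} {r : B.P} {c : ℕ} :
      B.TwoChildTouch p q qr ql → B.se p ∈ B.edgesOf qr →
      t ∈ T → t ≠ cl → t ≠ s →
      SCrun B p T s qr cr t r c → SCrun B p T s q cr cl r c
  | two_right_rc {q qr ql : B.P} {cr cl t : ℕ} {r : B.P} {c : ℕ} :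
      B.TwoChildTouch p q qr ql → B.se p ∈ B.edgesOf qr →
      t ∈ T → t ≠ cl → t ≠ s →
      RCrun B p ql cl s t r c → SCrun B p T s q cr cl r c
  | two_left_sc {q qr ql : B.P} {cr cl t : ℕ} {r : B.P} {c : ℕ} :
      B.TwoChildTouch p q qr ql → B.se p ∉ B.edgesOf qr →
      t ∈ T → t ≠ cr → t ≠ s →
      SCrun B p T s ql t cl r c → SCrun B p T s q cr cl r c
  | two_left_lc {q qr ql : B.P} {cr cl t : ℕ} {r : B.P} {c : ℕ} :
      B.TwoChildTouch p q qr ql → B.se p ∉ B.edgesOf qr →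
      t ∈ T → t ≠ cr → t ≠ s →
      LCrun B p qr cr s t r c → SCrun B p T s q cr cl r c

/-- The set of labels that a labeling `L` of the paths puts on the edge `e`. -/
def edgeLabels (B : Bncs) (L : B.P → ℕ) (e : Sym2 B.V) : Set ℕ :=
  {c | ∃ q : B.P, e ∈ B.edgesOf q ∧ L q = c}

/-- The face `f` is solved by the labeling `L` if `L(e^f_r) ∩ L(e^f_ℓ) = ∅`. -/
def SolvedBy (B : Bncs) (L : B.P → ℕ) (f : B.F) : Prop :=
  B.edgeLabels L (B.er f) ∩ B.edgeLabels L (B.el f) = ∅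

/-- `L` is a forest labeling: for each label, the union of the paths with that label
is a forest. -/
def IsForestLabeling (B : Bncs) (L : B.P → ℕ) : Prop :=
  ∀ c : ℕ, (⨆ q ∈ {q : B.P | L q = c}, (B.walk q).2.2.toSubgraph).coe.IsAcyclic

end Bncs

namespace Bncs

/-- Ancestor relation along the `parent` function. -/
def PAnc (B : Bncs) (a b : B.P) : Prop :=
  Relation.ReflTransGen (fun x y => B.parent x = some y) a b

lemma panc_le (B : Bncs) {a b : B.P} (h : B.PAnc a b) : B.le a b := by
  induction h with
  | refl => exact B.le_refl a
  | tail _ step ih =>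
      exact B.le_trans _ _ _ ih
        (B.child_le _ _ ((B.parent_spec _ _).mp step)).1

lemma panc_total (B : Bncs) {r a b : B.P} (ha : B.PAnc r a) :
    B.PAnc r b → B.PAnc a b ∨ B.PAnc b a := by
  induction ha using Relation.ReflTransGen.head_induction_on with
  | refl => exact fun hb => Or.inl hb
  | head step tail ih =>
      intro hb
      rcases Relation.ReflTransGen.cases_head hb with rfl | ⟨z', step', tail'⟩
      · exact Or.inr (Relation.ReflTransGen.head step tail)
      · rw [step] at step'
        cases Option.some.inj step'
        exact ih tail'

lemma no_up (B : Bncs) {q c' : B.P}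
    (h : B.rightChild q = some c' ∨ B.leftChild q = some c')
    (ha : B.PAnc q c') : False := by
  have h1 := B.panc_le ha
  have h2 := B.child_le q c' h
  exact h2.2 (B.le_antisymm _ _ h2.1 h1)

lemma run_panc (B : Bncs) (p : B.P) {q : B.P} {c₁ c₂ c₃ : ℕ} {r : B.P} {c : ℕ}
    (h : B.RCrun p q c₁ c₂ c₃ r c) : B.PAnc r q := by
  induction h with
  | base q c₁ c₂ c₃ => exact Relation.ReflTransGen.refl
  | one h1 _ ih =>
      refine ih.tail ((B.parent_spec _ _).mpr ?_)
      rcases h1 with ⟨h, _⟩ | ⟨h, _⟩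
      · exact Or.inl h
      · exact Or.inr h
  | right h2 _ ih => exact ih.tail ((B.parent_spec _ _).mpr (Or.inl h2.1))
  | left h2 _ ih => exact ih.tail ((B.parent_spec _ _).mpr (Or.inr h2.2.1))

lemma rdesc_panc (B : Bncs) (p : B.P) {q r : B.P}
    (h : B.Rdesc p q r) : B.PAnc r q := by
  induction h with
  | refl q => exact Relation.ReflTransGen.refl
  | one h1 _ ih =>
      refine ih.tail ((B.parent_spec _ _).mpr ?_)
      rcases h1 with ⟨h, _⟩ | ⟨h, _⟩
      · exact Or.inl h
      · exact Or.inr h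
  | two h2 _ ih => exact ih.tail ((B.parent_spec _ _).mpr (Or.inl h2.1))

lemma ldesc_panc (B : Bncs) (p : B.P) {q r : B.P}
    (h : B.Ldesc p q r) : B.PAnc r q := by
  induction h with
  | refl q => exact Relation.ReflTransGen.refl
  | one h1 _ ih =>
      refine ih.tail ((B.parent_spec _ _).mpr ?_)
      rcases h1 with ⟨h, _⟩ | ⟨h, _⟩
      · exact Or.inl h
      · exact Or.inr h
  | two h2 _ ih => exact ih.tail ((B.parent_spec _ _).mpr (Or.inr h2.2.1))

lemma not_both (B : Bncs) (p : B.P) {q qr ql r : B.P}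
    (h : B.TwoChildTouch p q qr ql) (hr : B.PAnc r qr) (hl : B.PAnc r ql) :
    False := by
  obtain ⟨hR, hL, _, _⟩ := h
  have hne : qr ≠ ql := fun e => B.children_ne q qr hR (by rw [e]; exact hL)
  rcases B.panc_total hr hl with h' | h'
  · rcases B.child_cov q qr ql (Or.inl hR) (B.panc_le h')
      (B.child_le q ql (Or.inr hL)).1 with e | e
    · exact hne e.symm
    · exact (B.child_le q ql (Or.inr hL)).2 e
  · rcases B.child_cov q ql qr (Or.inr hL) (B.panc_le h')
      (B.child_le q qr (Or.inl hR)).1 with e | e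
    · exact hne e
    · exact (B.child_le q qr (Or.inl hR)).2 e

lemma one_unique (B : Bncs) (p : B.P) {q a b : B.P}
    (h1 : B.OneChildTouch p q a) (h2 : B.OneChildTouch p q b) : a = b := by
  rcases h1 with ⟨ha, hta, hna⟩ | ⟨ha, hta, hna⟩ <;>
    rcases h2 with ⟨hb, htb, hnb⟩ | ⟨hb, htb, hnb⟩
  · rw [ha] at hb; exact Option.some.inj hb
  · exact absurd hta (hnb a ha)
  · exact absurd htb (hna b hb)
  · rw [ha] at hb; exact Option.some.inj hb

lemma one_two (B : Bncs) (p : B.P) {q a qr ql : B.P}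
    (h1 : B.OneChildTouch p q a) (h2 : B.TwoChildTouch p q qr ql) : False := by
  obtain ⟨hR, hL, htr, htl⟩ := h2
  rcases h1 with ⟨_, _, hna⟩ | ⟨_, _, hna⟩
  · exact hna ql hL htl
  · exact hna qr hR htr

lemma claimA (B : Bncs) (p : B.P) {q : B.P} {c₁ c₂ c₃ : ℕ} {r : B.P} {c : ℕ}
    (h : B.RCrun p q c₁ c₂ c₃ r c) : B.Rdesc p q r → c = c₁ := by
  induction h with
  | base q c₁ c₂ c₃ => exact fun _ => rfl
  | one h1 hrun ih =>
      intro hd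
      cases hd with
      | refl =>
          refine absurd (B.run_panc p hrun) fun ha => B.no_up ?_ ha
          rcases h1 with ⟨h, _⟩ | ⟨h, _⟩
          · exact Or.inl h
          · exact Or.inr h
      | one h1' hd' => cases B.one_unique p h1 h1'; exact ih hd'
      | two h2 _ => exact absurd (B.one_two p h1 h2) not_false
  | right h2 hrun ih =>
      intro hd
      cases hd with
      | refl => exact absurd (B.run_panc p hrun) fun ha => B.no_up (Or.inl h2.1) ha
      | one h1 _ => exact absurd (B.one_two p h1 h2) not_false
      | two h2' hd' =>
          have : _ = _ := h2.1.symm.trans h2'.1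
          cases Option.some.inj this
          exact ih hd'
  | left h2 hrun ih =>
      intro hd
      cases hd with
      | refl => exact absurd (B.run_panc p hrun) fun ha => B.no_up (Or.inr h2.2.1) ha
      | one h1 _ => exact absurd (B.one_two p h1 h2) not_false
      | two h2' hd' =>
          have : _ = _ := h2.1.symm.trans h2'.1
          cases Option.some.inj this
          exact absurd (B.not_both p h2 (B.rdesc_panc p hd') (B.run_panc p hrun))
            not_false

lemma claimB (B : Bncs) (p : B.P) {q : B.P} {c₁ c₂ c₃ : ℕ} {r : B.P} {c : ℕ}
    (h : B.RCrun p q c₁ c₂ c₃ r c) : B.Ldesc p q r → c = c₁ ∨ c = c₂ := by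
  induction h with
  | base q c₁ c₂ c₃ => exact fun _ => Or.inl rfl
  | one h1 hrun ih =>
      intro hd
      cases hd with
      | refl =>
          refine absurd (B.run_panc p hrun) fun ha => B.no_up ?_ ha
          rcases h1 with ⟨h, _⟩ | ⟨h, _⟩
          · exact Or.inl h
          · exact Or.inr h
      | one h1' hd' => cases B.one_unique p h1 h1'; exact ih hd'
      | two h2 _ => exact absurd (B.one_two p h1 h2) not_false
  | right h2 hrun ih =>
      intro hd
      cases hd with
      | refl => exact absurd (B.run_panc p hrun) fun ha => B.no_up (Or.inl h2.1) ha
      | one h1 _ => exact absurd (B.one_two p h1 h2) not_false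
      | two h2' hd' =>
          have : _ = _ := h2.2.1.symm.trans h2'.2.1
          cases Option.some.inj this
          exact absurd (B.not_both p h2 (B.run_panc p hrun) (B.ldesc_panc p hd'))
            not_false
  | left h2 hrun ih =>
      intro hd
      cases hd with
      | refl => exact absurd (B.run_panc p hrun) fun ha => B.no_up (Or.inr h2.2.1) ha
      | one h1 _ => exact absurd (B.one_two p h1 h2) not_false
      | two h2' hd' =>
          have : _ = _ := h2.2.1.symm.trans h2'.2.1
          cases Option.some.inj this
          rcases ih hd' with h | h
          · exact Or.inr h
          · exact Or.inl h

end Bncs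

/-- Let `p ∈ MAX`, let `(c₁,c₂,c₃)` be any ordering of `triple(p)`
and let `q ∈ Touch_p`.  If `RC(p,q,(c₁,c₂,c₃))` is called, then every path in `R(q)`
receives the label `c₁` and every path in `L(q)` receives a label in `{c₁, c₂}`. -/
theorem RC_labels_right_and_left (B : Bncs) (p : B.P) (hp : p ∈ B.MAXset)
    (c₁ c₂ c₃ : ℕ) (h₁₂ : c₁ ≠ c₂) (h₁₃ : c₁ ≠ c₃) (h₂₃ : c₂ ≠ c₃)
    (q : B.P) (hq : q ∈ B.Touch p) :
    {c | ∃ r, B.Rdesc p q r ∧ B.RCrun p q c₁ c₂ c₃ r c} = {c₁} ∧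
    {c | ∃ r, B.Ldesc p q r ∧ B.RCrun p q c₁ c₂ c₃ r c} ⊆ ({c₁, c₂} : Set ℕ) := by
  constructor
  · ext c
    simp only [Set.mem_setOf_eq, Set.mem_singleton_iff]
    constructor
    · rintro ⟨r, hd, hr⟩
      exact B.claimA p hr hd
    · rintro rfl
      exact ⟨q, Bncs.Rdesc.refl q, Bncs.RCrun.base q _ c₂ c₃⟩
  · rintro c ⟨r, hd, hr⟩
    have := B.claimB p hr hd
    simp only [Set.mem_insert_iff, Set.mem_singleton_iff]
    exact this
end

section
/- Let p ∈ MAX, let c_r, c_ℓ ∈ triple(p) \ {scc(p)} be not necessarily distinct, and let q ∈ Touch_p contain the edge se^p. If SC(p,q,(c_r,c_ℓ)) is called, then every path in R(q) receives a label in {c_r, scc(p)} and every path in L(q) receives a label in {c_ℓ, scc(p)}. -/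
open SimpleGraph

namespace Bncs

variable {B : Bncs}

/-- Iterated parent. -/
def anc (B : Bncs) : ℕ → B.P → Option B.P
  | 0, r => some r
  | n+1, r => (B.parent r).bind (B.anc n)

lemma anc_zero (r : B.P) : B.anc 0 r = some r := rfl

lemma anc_succ (n : ℕ) (r : B.P) :
    B.anc (n + 1) r = (B.parent r).bind (B.anc n) := rfl

lemma anc_add (m n : ℕ) (r : B.P) :
    B.anc (m + n) r = (B.anc m r).bind (B.anc n) := by
  induction m generalizing r with
  | zero => simp [anc_zero]
  | succ m ih =>
    have h : m + 1 + n = (m + n) + 1 := by omega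
    rw [h, anc_succ, anc_succ]
    cases B.parent r with
    | none => rfl
    | some x => simpa using ih x

lemma le_of_anc : ∀ {n : ℕ} {r a : B.P}, B.anc n r = some a → B.le r a := by
  intro n
  induction n with
  | zero => intro r a h; cases h; exact B.le_refl _
  | succ n ih =>
    intro r a h
    rw [anc_succ] at h
    cases hp : B.parent r with
    | none => rw [hp] at h; cases h
    | some x =>
      rw [hp] at h
      have h1 : B.le r x := (B.child_le x r ((B.parent_spec r x).mp hp)).1
      exact B.le_trans _ _ _ h1 (ih h)

lemma anc_step {n : ℕ} {r a q : B.P} (h1 : B.anc n r = some a)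
    (h2 : B.parent a = some q) : B.anc (n + 1) r = some q := by
  rw [anc_add n 1 r, h1]
  show B.anc 1 a = some q
  rw [anc_succ, h2]
  rfl

lemma parent_of_oct {p q q' : B.P} (h : B.OneChildTouch p q q') :
    B.parent q' = some q := by
  rcases h with ⟨h1, -, -⟩ | ⟨h1, -, -⟩
  · exact (B.parent_spec q' q).mpr (Or.inl h1)
  · exact (B.parent_spec q' q).mpr (Or.inr h1)

lemma parent_of_tct_r {p q qr ql : B.P} (h : B.TwoChildTouch p q qr ql) :
    B.parent qr = some q :=
  (B.parent_spec qr q).mpr (Or.inl h.1)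

lemma parent_of_tct_l {p q qr ql : B.P} (h : B.TwoChildTouch p q qr ql) :
    B.parent ql = some q :=
  (B.parent_spec ql q).mpr (Or.inr h.2.1)

lemma not_reach_parent {n : ℕ} {q q' : B.P} (hp : B.parent q' = some q)
    (h : B.anc n q = some q') : False := by
  have h1 := B.child_le q q' ((B.parent_spec q' q).mp hp)
  exact h1.2 (B.le_antisymm q' q h1.1 (le_of_anc h))

lemma no_cycle {d : ℕ} {q : B.P} (hd : d ≠ 0) (h : B.anc d q = some q) : False := by
  obtain ⟨d', rfl⟩ := Nat.exists_eq_succ_of_ne_zero hd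
  rw [anc_succ] at h
  cases hp : B.parent q with
  | none => rw [hp] at h; cases h
  | some x =>
    rw [hp] at h
    simp only [Option.bind_some] at h
    exact not_reach_parent hp h

lemma anc_lt {m n : ℕ} {r q : B.P} (h : m < n)
    (hm : B.anc m r = some q) (hn : B.anc n r = some q) : False := by
  have h2 := anc_add (B := B) m (n - m) r
  rw [show m + (n - m) = n from by omega, hn, hm] at h2
  simp only [Option.bind_some] at h2
  exact no_cycle (by omega) h2.symm

lemma no_common {p q qr ql r : B.P} (htc : B.TwoChildTouch p q qr ql)
    {m n : ℕ} (hm : B.anc m r = some qr) (hn : B.anc n r = some ql) : False := by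
  have hq1 : B.anc (m + 1) r = some q := anc_step hm (parent_of_tct_r htc)
  have hq2 : B.anc (n + 1) r = some q := anc_step hn (parent_of_tct_l htc)
  rcases Nat.lt_trichotomy m n with h | rfl | h
  · exact anc_lt (by omega) hq1 hq2
  · rw [hm] at hn
    exact B.children_ne q qr htc.1 (Option.some.inj hn ▸ htc.2.1)
  · exact anc_lt (by omega) hq2 hq1

lemma oct_det {p q a b : B.P} (h1 : B.OneChildTouch p q a)
    (h2 : B.OneChildTouch p q b) : a = b := by
  rcases h1 with ⟨hr1, ht1, hl1⟩ | ⟨hl1, ht1, hr1⟩ <;>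
    rcases h2 with ⟨hr2, ht2, hl2⟩ | ⟨hl2, ht2, hr2⟩
  · rw [hr1] at hr2; exact Option.some.inj hr2
  · exact absurd ht1 (hr2 a hr1)
  · exact absurd ht2 (hr1 b hr2)
  · rw [hl1] at hl2; exact Option.some.inj hl2

lemma oct_tct {p q a qr ql : B.P} (h1 : B.OneChildTouch p q a)
    (h2 : B.TwoChildTouch p q qr ql) : False := by
  rcases h1 with ⟨-, -, hl⟩ | ⟨-, -, hr⟩
  · exact hl ql h2.2.1 h2.2.2.2
  · exact hr qr h2.1 h2.2.2.1

lemma tct_det {p q a b a' b' : B.P} (h1 : B.TwoChildTouch p q a b)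
    (h2 : B.TwoChildTouch p q a' b') : a = a' ∧ b = b' := by
  have hr := h1.1; rw [h2.1] at hr
  have hl := h1.2.1; rw [h2.2.1] at hl
  exact ⟨(Option.some.inj hr).symm, (Option.some.inj hl).symm⟩

lemma reach_RC {p q : B.P} {c1 c2 c3 : ℕ} {r : B.P} {c : ℕ}
    (h : B.RCrun p q c1 c2 c3 r c) : ∃ n, B.anc n r = some q := by
  induction h with
  | base q c1 c2 c3 => exact ⟨0, rfl⟩
  | one hoc _ ih => obtain ⟨n, hn⟩ := ih; exact ⟨n + 1, anc_step hn (parent_of_oct hoc)⟩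
  | right htc _ ih => obtain ⟨n, hn⟩ := ih; exact ⟨n + 1, anc_step hn (parent_of_tct_r htc)⟩
  | left htc _ ih => obtain ⟨n, hn⟩ := ih; exact ⟨n + 1, anc_step hn (parent_of_tct_l htc)⟩

lemma reach_LC {p q : B.P} {c1 c2 c3 : ℕ} {r : B.P} {c : ℕ}
    (h : B.LCrun p q c1 c2 c3 r c) : ∃ n, B.anc n r = some q := by
  induction h with
  | base q c1 c2 c3 => exact ⟨0, rfl⟩
  | one hoc _ ih => obtain ⟨n, hn⟩ := ih; exact ⟨n + 1, anc_step hn (parent_of_oct hoc)⟩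
  | right htc _ ih => obtain ⟨n, hn⟩ := ih; exact ⟨n + 1, anc_step hn (parent_of_tct_r htc)⟩
  | left htc _ ih => obtain ⟨n, hn⟩ := ih; exact ⟨n + 1, anc_step hn (parent_of_tct_l htc)⟩

lemma reach_SC {p : B.P} {T : Finset ℕ} {s : ℕ} {q : B.P} {cr cl : ℕ} {r : B.P} {c : ℕ}
    (h : B.SCrun p T s q cr cl r c) : ∃ n, B.anc n r = some q := by
  induction h with
  | base q cr cl => exact ⟨0, rfl⟩
  | one hoc _ ih => obtain ⟨n, hn⟩ := ih; exact ⟨n + 1, anc_step hn (parent_of_oct hoc)⟩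
  | two_right_sc htc _ _ _ _ _ ih =>
      obtain ⟨n, hn⟩ := ih; exact ⟨n + 1, anc_step hn (parent_of_tct_r htc)⟩
  | two_right_rc htc _ _ _ _ hrc =>
      obtain ⟨n, hn⟩ := reach_RC hrc; exact ⟨n + 1, anc_step hn (parent_of_tct_l htc)⟩
  | two_left_sc htc _ _ _ _ _ ih =>
      obtain ⟨n, hn⟩ := ih; exact ⟨n + 1, anc_step hn (parent_of_tct_l htc)⟩
  | two_left_lc htc _ _ _ _ hlc =>
      obtain ⟨n, hn⟩ := reach_LC hlc; exact ⟨n + 1, anc_step hn (parent_of_tct_r htc)⟩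

lemma reach_Rdesc {p q r : B.P} (h : B.Rdesc p q r) : ∃ n, B.anc n r = some q := by
  induction h with
  | refl q => exact ⟨0, rfl⟩
  | one hoc _ ih => obtain ⟨n, hn⟩ := ih; exact ⟨n + 1, anc_step hn (parent_of_oct hoc)⟩
  | two htc _ ih => obtain ⟨n, hn⟩ := ih; exact ⟨n + 1, anc_step hn (parent_of_tct_r htc)⟩

lemma reach_Ldesc {p q r : B.P} (h : B.Ldesc p q r) : ∃ n, B.anc n r = some q := by
  induction h with
  | refl q => exact ⟨0, rfl⟩
  | one hoc _ ih => obtain ⟨n, hn⟩ := ih; exact ⟨n + 1, anc_step hn (parent_of_oct hoc)⟩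
  | two htc _ ih => obtain ⟨n, hn⟩ := ih; exact ⟨n + 1, anc_step hn (parent_of_tct_l htc)⟩

end Bncs

namespace Bncs

variable {B : Bncs}

/-- Every path on the right spine of the subtree of `q` gets the label `c1` in
`RC(p,q,(c1,c2,c3))`. -/
lemma RC_R {p q : B.P} {c1 c2 c3 : ℕ} {r : B.P} {c : ℕ}
    (h : B.RCrun p q c1 c2 c3 r c) : B.Rdesc p q r → c = c1 := by
  induction h with
  | base q c1 c2 c3 => intro _; rfl
  | one hoc hrun ih =>
    intro hr
    cases hr with
    | refl =>
      obtain ⟨n, hn⟩ := reach_RC hrun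
      exact (not_reach_parent (parent_of_oct hoc) hn).elim
    | one hoc' hr' => obtain rfl := oct_det hoc hoc'; exact ih hr'
    | two htc' hr' => exact (oct_tct hoc htc').elim
  | right htc hrun ih =>
    intro hr
    cases hr with
    | refl =>
      obtain ⟨n, hn⟩ := reach_RC hrun
      exact (not_reach_parent (parent_of_tct_r htc) hn).elim
    | one hoc' hr' => exact (oct_tct hoc' htc).elim
    | two htc' hr' =>
      obtain ⟨rfl, rfl⟩ := tct_det htc htc'
      exact ih hr'
  | left htc hrun ih =>
    intro hr
    cases hr with
    | refl =>
      obtain ⟨n, hn⟩ := reach_RC hrun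
      exact (not_reach_parent (parent_of_tct_l htc) hn).elim
    | one hoc' hr' => exact (oct_tct hoc' htc).elim
    | two htc' hr' =>
      obtain ⟨rfl, rfl⟩ := tct_det htc htc'
      obtain ⟨n, hn⟩ := reach_RC hrun
      obtain ⟨m, hm⟩ := reach_Rdesc hr'
      exact (no_common htc hm hn).elim

/-- Every path on the left spine of the subtree of `q` gets a label in `{c1, c2}` in
`RC(p,q,(c1,c2,c3))`. -/
lemma RC_L {p q : B.P} {c1 c2 c3 : ℕ} {r : B.P} {c : ℕ}
    (h : B.RCrun p q c1 c2 c3 r c) : B.Ldesc p q r → c = c1 ∨ c = c2 := by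
  induction h with
  | base q c1 c2 c3 => intro _; exact Or.inl rfl
  | one hoc hrun ih =>
    intro hr
    cases hr with
    | refl =>
      obtain ⟨n, hn⟩ := reach_RC hrun
      exact (not_reach_parent (parent_of_oct hoc) hn).elim
    | one hoc' hr' => obtain rfl := oct_det hoc hoc'; exact ih hr'
    | two htc' hr' => exact (oct_tct hoc htc').elim
  | right htc hrun ih =>
    intro hr
    cases hr with
    | refl =>
      obtain ⟨n, hn⟩ := reach_RC hrun
      exact (not_reach_parent (parent_of_tct_r htc) hn).elim
    | one hoc' hr' => exact (oct_tct hoc' htc).elim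
    | two htc' hr' =>
      obtain ⟨rfl, rfl⟩ := tct_det htc htc'
      obtain ⟨n, hn⟩ := reach_RC hrun
      obtain ⟨m, hm⟩ := reach_Ldesc hr'
      exact (no_common htc hn hm).elim
  | left htc hrun ih =>
    intro hr
    cases hr with
    | refl =>
      obtain ⟨n, hn⟩ := reach_RC hrun
      exact (not_reach_parent (parent_of_tct_l htc) hn).elim
    | one hoc' hr' => exact (oct_tct hoc' htc).elim
    | two htc' hr' =>
      obtain ⟨rfl, rfl⟩ := tct_det htc htc'
      exact (ih hr').symm

/-- Every path on the left spine of the subtree of `q` gets the label `c1` in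
`LC(p,q,(c1,c2,c3))`. -/
lemma LC_L {p q : B.P} {c1 c2 c3 : ℕ} {r : B.P} {c : ℕ}
    (h : B.LCrun p q c1 c2 c3 r c) : B.Ldesc p q r → c = c1 := by
  induction h with
  | base q c1 c2 c3 => intro _; rfl
  | one hoc hrun ih =>
    intro hr
    cases hr with
    | refl =>
      obtain ⟨n, hn⟩ := reach_LC hrun
      exact (not_reach_parent (parent_of_oct hoc) hn).elim
    | one hoc' hr' => obtain rfl := oct_det hoc hoc'; exact ih hr'
    | two htc' hr' => exact (oct_tct hoc htc').elim
  | left htc hrun ih =>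
    intro hr
    cases hr with
    | refl =>
      obtain ⟨n, hn⟩ := reach_LC hrun
      exact (not_reach_parent (parent_of_tct_l htc) hn).elim
    | one hoc' hr' => exact (oct_tct hoc' htc).elim
    | two htc' hr' =>
      obtain ⟨rfl, rfl⟩ := tct_det htc htc'
      exact ih hr'
  | right htc hrun ih =>
    intro hr
    cases hr with
    | refl =>
      obtain ⟨n, hn⟩ := reach_LC hrun
      exact (not_reach_parent (parent_of_tct_r htc) hn).elim
    | one hoc' hr' => exact (oct_tct hoc' htc).elim
    | two htc' hr' =>
      obtain ⟨rfl, rfl⟩ := tct_det htc htc'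
      obtain ⟨n, hn⟩ := reach_LC hrun
      obtain ⟨m, hm⟩ := reach_Ldesc hr'
      exact (no_common htc hn hm).elim

/-- Every path on the right spine of the subtree of `q` gets a label in `{c1, c2}` in
`LC(p,q,(c1,c2,c3))`. -/
lemma LC_R {p q : B.P} {c1 c2 c3 : ℕ} {r : B.P} {c : ℕ}
    (h : B.LCrun p q c1 c2 c3 r c) : B.Rdesc p q r → c = c1 ∨ c = c2 := by
  induction h with
  | base q c1 c2 c3 => intro _; exact Or.inl rfl
  | one hoc hrun ih =>
    intro hr
    cases hr with
    | refl =>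
      obtain ⟨n, hn⟩ := reach_LC hrun
      exact (not_reach_parent (parent_of_oct hoc) hn).elim
    | one hoc' hr' => obtain rfl := oct_det hoc hoc'; exact ih hr'
    | two htc' hr' => exact (oct_tct hoc htc').elim
  | left htc hrun ih =>
    intro hr
    cases hr with
    | refl =>
      obtain ⟨n, hn⟩ := reach_LC hrun
      exact (not_reach_parent (parent_of_tct_l htc) hn).elim
    | one hoc' hr' => exact (oct_tct hoc' htc).elim
    | two htc' hr' =>
      obtain ⟨rfl, rfl⟩ := tct_det htc htc'
      obtain ⟨n, hn⟩ := reach_LC hrun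
      obtain ⟨m, hm⟩ := reach_Rdesc hr'
      exact (no_common htc hm hn).elim
  | right htc hrun ih =>
    intro hr
    cases hr with
    | refl =>
      obtain ⟨n, hn⟩ := reach_LC hrun
      exact (not_reach_parent (parent_of_tct_r htc) hn).elim
    | one hoc' hr' => exact (oct_tct hoc' htc).elim
    | two htc' hr' =>
      obtain ⟨rfl, rfl⟩ := tct_det htc htc'
      exact (ih hr').symm

/-- Every path on the right spine of the subtree of `q` gets a label in `{cr, s}` in
`SC(p,q,(cr,cl))`. -/
lemma SC_R {p : B.P} {T : Finset ℕ} {s : ℕ} {q : B.P} {cr cl : ℕ} {r : B.P} {c : ℕ}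
    (h : B.SCrun p T s q cr cl r c) : B.Rdesc p q r → c = cr ∨ c = s := by
  induction h with
  | base q cr cl => intro _; exact Or.inr rfl
  | one hoc hrun ih =>
    intro hr
    cases hr with
    | refl =>
      obtain ⟨n, hn⟩ := reach_SC hrun
      exact (not_reach_parent (parent_of_oct hoc) hn).elim
    | one hoc' hr' => obtain rfl := oct_det hoc hoc'; exact ih hr'
    | two htc' hr' => exact (oct_tct hoc htc').elim
  | two_right_sc htc hse ht h1 h2 hrun ih =>
    intro hr
    cases hr with
    | refl =>
      obtain ⟨n, hn⟩ := reach_SC hrun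
      exact (not_reach_parent (parent_of_tct_r htc) hn).elim
    | one hoc' hr' => exact (oct_tct hoc' htc).elim
    | two htc' hr' =>
      obtain ⟨rfl, rfl⟩ := tct_det htc htc'
      exact ih hr'
  | two_right_rc htc hse ht h1 h2 hrc =>
    intro hr
    cases hr with
    | refl =>
      obtain ⟨n, hn⟩ := reach_RC hrc
      exact (not_reach_parent (parent_of_tct_l htc) hn).elim
    | one hoc' hr' => exact (oct_tct hoc' htc).elim
    | two htc' hr' =>
      obtain ⟨rfl, rfl⟩ := tct_det htc htc'
      obtain ⟨n, hn⟩ := reach_RC hrc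
      obtain ⟨m, hm⟩ := reach_Rdesc hr'
      exact (no_common htc hm hn).elim
  | two_left_sc htc hse ht h1 h2 hrun ih =>
    intro hr
    cases hr with
    | refl =>
      obtain ⟨n, hn⟩ := reach_SC hrun
      exact (not_reach_parent (parent_of_tct_l htc) hn).elim
    | one hoc' hr' => exact (oct_tct hoc' htc).elim
    | two htc' hr' =>
      obtain ⟨rfl, rfl⟩ := tct_det htc htc'
      obtain ⟨n, hn⟩ := reach_SC hrun
      obtain ⟨m, hm⟩ := reach_Rdesc hr'
      exact (no_common htc hm hn).elim
  | two_left_lc htc hse ht h1 h2 hlc =>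
    intro hr
    cases hr with
    | refl =>
      obtain ⟨n, hn⟩ := reach_LC hlc
      exact (not_reach_parent (parent_of_tct_r htc) hn).elim
    | one hoc' hr' => exact (oct_tct hoc' htc).elim
    | two htc' hr' =>
      obtain ⟨rfl, rfl⟩ := tct_det htc htc'
      exact LC_R hlc hr'

/-- Every path on the left spine of the subtree of `q` gets a label in `{cl, s}` in
`SC(p,q,(cr,cl))`. -/
lemma SC_L {p : B.P} {T : Finset ℕ} {s : ℕ} {q : B.P} {cr cl : ℕ} {r : B.P} {c : ℕ}
    (h : B.SCrun p T s q cr cl r c) : B.Ldesc p q r → c = cl ∨ c = s := by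
  induction h with
  | base q cr cl => intro _; exact Or.inr rfl
  | one hoc hrun ih =>
    intro hr
    cases hr with
    | refl =>
      obtain ⟨n, hn⟩ := reach_SC hrun
      exact (not_reach_parent (parent_of_oct hoc) hn).elim
    | one hoc' hr' => obtain rfl := oct_det hoc hoc'; exact ih hr'
    | two htc' hr' => exact (oct_tct hoc htc').elim
  | two_right_sc htc hse ht h1 h2 hrun ih =>
    intro hr
    cases hr with
    | refl =>
      obtain ⟨n, hn⟩ := reach_SC hrun
      exact (not_reach_parent (parent_of_tct_r htc) hn).elim
    | one hoc' hr' => exact (oct_tct hoc' htc).elim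
    | two htc' hr' =>
      obtain ⟨rfl, rfl⟩ := tct_det htc htc'
      obtain ⟨n, hn⟩ := reach_SC hrun
      obtain ⟨m, hm⟩ := reach_Ldesc hr'
      exact (no_common htc hn hm).elim
  | two_right_rc htc hse ht h1 h2 hrc =>
    intro hr
    cases hr with
    | refl =>
      obtain ⟨n, hn⟩ := reach_RC hrc
      exact (not_reach_parent (parent_of_tct_l htc) hn).elim
    | one hoc' hr' => exact (oct_tct hoc' htc).elim
    | two htc' hr' =>
      obtain ⟨rfl, rfl⟩ := tct_det htc htc'
      exact RC_L hrc hr'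
  | two_left_sc htc hse ht h1 h2 hrun ih =>
    intro hr
    cases hr with
    | refl =>
      obtain ⟨n, hn⟩ := reach_SC hrun
      exact (not_reach_parent (parent_of_tct_l htc) hn).elim
    | one hoc' hr' => exact (oct_tct hoc' htc).elim
    | two htc' hr' =>
      obtain ⟨rfl, rfl⟩ := tct_det htc htc'
      exact ih hr'
  | two_left_lc htc hse ht h1 h2 hlc =>
    intro hr
    cases hr with
    | refl =>
      obtain ⟨n, hn⟩ := reach_LC hlc
      exact (not_reach_parent (parent_of_tct_r htc) hn).elim
    | one hoc' hr' => exact (oct_tct hoc' htc).elim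
    | two htc' hr' =>
      obtain ⟨rfl, rfl⟩ := tct_det htc htc'
      obtain ⟨n, hn⟩ := reach_LC hlc
      obtain ⟨m, hm⟩ := reach_Ldesc hr'
      exact (no_common htc hn hm).elim

end Bncs

/-- Let `p ∈ MAX`, let `c_r, c_ℓ ∈ triple(p) \ {scc(p)}` be not
necessarily distinct, and let `q ∈ Touch_p` contain the edge `se^p`.  If
`SC(p,q,(c_r,c_ℓ))` is called, then every path in `R(q)` receives a label in
`{c_r, scc(p)}` and every path in `L(q)` receives a label in `{c_ℓ, scc(p)}`. -/
theorem SC_labels_right_and_left (B : Bncs) (p : B.P) (hp : p ∈ B.MAXset)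
    (tp : Finset ℕ) (s cr cl : ℕ) (htp : tp.card = 3) (hs : s ∈ tp)
    (hcr : cr ∈ tp) (hcl : cl ∈ tp) (hcrs : cr ≠ s) (hcls : cl ≠ s)
    (q : B.P) (hq : q ∈ B.Touch p) (hse : B.se p ∈ B.edgesOf q) :
    {c | ∃ r, B.Rdesc p q r ∧ B.SCrun p tp s q cr cl r c} ⊆ ({cr, s} : Set ℕ) ∧
    {c | ∃ r, B.Ldesc p q r ∧ B.SCrun p tp s q cr cl r c} ⊆ ({cl, s} : Set ℕ) := by
  constructor
  · rintro c ⟨r, hrd, hrun⟩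
    rcases Bncs.SC_R hrun hrd with rfl | rfl <;> simp
  · rintro c ⟨r, hld, hrun⟩
    rcases Bncs.SC_L hrun hld with rfl | rfl <;> simp
end

section
/- Let P be a set of non-crossing, pairwise single-touch shortest paths in a plane graph G, and let v be a vertex of G. Then the union of all paths of P containing v is a tree. -/
open SimpleGraph

/-- An abstract plane graph: an undirected simple graph together with edge lengths,
a predicate selecting the vertices lying on the external face of the fixed planar
embedding, and an abstract symmetric crossing relation on walks (two walks cross if
they cross each other in the embedding). -/
structure PlaneGraph where
  V : Type
  G : SimpleGraph V
  len : Sym2 V → ℝ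
  OuterVertex : V → Prop
  Crosses : ((u : V) × (v : V) × G.Walk u v) → ((u : V) × (v : V) × G.Walk u v) → Prop
  crosses_symm : ∀ p q, Crosses p q → Crosses q p

/-- A walk of a plane graph bundled with its two extremal vertices. -/
abbrev PlaneGraph.WalkOn (PG : PlaneGraph) : Type :=
  (u : PG.V) × (v : PG.V) × PG.G.Walk u v

/-- The length (weight) of a bundled walk. -/
def PlaneGraph.wlen (PG : PlaneGraph) (p : PG.WalkOn) : ℝ :=
  (p.2.2.edges.map PG.len).sum

/-- `p` is a shortest path: it is a simple path and no walk between its extremal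
vertices is shorter. -/
def PlaneGraph.IsShortestPath (PG : PlaneGraph) (p : PG.WalkOn) : Prop :=
  p.2.2.IsPath ∧ ∀ w : PG.G.Walk p.1 p.2.1, PG.wlen p ≤ PG.wlen ⟨p.1, p.2.1, w⟩

/-- Two paths are single-touch if their intersection (as subgraphs) is a possibly
empty path. -/
def PlaneGraph.SingleTouch (PG : PlaneGraph) (p q : PG.WalkOn) : Prop :=
  (p.2.2.toSubgraph ⊓ q.2.2.toSubgraph).verts = ∅ ∨
    ∃ (a b : PG.V) (w : PG.G.Walk a b), w.IsPath ∧
      w.toSubgraph = p.2.2.toSubgraph ⊓ q.2.2.toSubgraph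

/-- `P` is a set of non-crossing shortest paths (NCS) in the plane graph `PG`:
the extremal vertices of every `p ∈ P` lie on the external face, every `p ∈ P` is a
shortest path, the paths of `P` are pairwise single-touch, and the paths of `P` are
pairwise non-crossing. -/
def PlaneGraph.IsNCS (PG : PlaneGraph) (P : Set PG.WalkOn) : Prop :=
  (∀ p ∈ P, PG.OuterVertex p.1 ∧ PG.OuterVertex p.2.1) ∧
  (∀ p ∈ P, PG.IsShortestPath p) ∧
  (∀ p ∈ P, ∀ q ∈ P, PG.SingleTouch p q) ∧
  (∀ p ∈ P, ∀ q ∈ P, ¬ PG.Crosses p q)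

/-- The Path Covering with Forests Number of a set of paths `P`: the minimum size of
a family of forests (acyclic subgraphs) such that every path of `P` is contained in
at least one forest of the family. -/
noncomputable def PlaneGraph.PCFN (PG : PlaneGraph) (P : Set PG.WalkOn) : ℕ :=
  sInf {k | ∃ F : Fin k → PG.G.Subgraph,
    (∀ i, (F i).coe.IsAcyclic) ∧ ∀ p ∈ P, ∃ i, p.2.2.toSubgraph ≤ F i}


section Aux

variable {V : Type} [DecidableEq V] {G : SimpleGraph V}

lemma end_mem_tail_support' {u w : V} (p : G.Walk u w) (h : ¬ p.Nil) : w ∈ p.support.tail := by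
  obtain ⟨y, hadj, q, rfl⟩ := Walk.not_nil_iff.mp h
  simpa using q.end_mem_support

lemma end_not_mem_takeUntil {x v y : V} {s : G.Walk v x} (hs : s.IsPath)
    (hy : y ∈ s.support) (hne : y ≠ x) : x ∉ (s.takeUntil y hy).support := by
  intro hx
  have hspec := Walk.take_spec s hy
  have hnodup : s.support.Nodup := hs.support_nodup
  rw [← hspec, Walk.support_append] at hnodup
  have hdisj := List.disjoint_of_nodup_append hnodup
  have hnn : ¬ (s.dropUntil y hy).Nil := Walk.not_nil_of_ne hne
  exact hdisj hx (end_mem_tail_support' _ hnn)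

lemma acyclic_of_pendant {H H' : SimpleGraph V} (hH : H.IsAcyclic) {u w : V} (hne : u ≠ w)
    (hu : ∀ x, ¬ H.Adj u x)
    (hH' : ∀ a b, H'.Adj a b → H.Adj a b ∨ s(a, b) = s(u, w)) : H'.IsAcyclic := by
  have resolve : ∀ {a : V}, H'.Adj u a → a = w := by
    intro a ha
    rcases hH' u a ha with h | h
    · exact absurd h (hu a)
    · rcases Sym2.eq_iff.mp h with ⟨-, rfl⟩ | ⟨h1, h2⟩
      · rfl
      · exact absurd h1 hne
  intro x c hc
  by_cases hux : u ∈ c.support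
  · have hc' := hc.rotate hux
    set c' := c.rotate u hux with hc'def
    have hnn : ¬ c'.Nil :=
      Walk.not_nil_iff_lt_length.mpr (by have := hc'.three_le_length; omega)
    obtain ⟨y, hadj, q, hq⟩ := Walk.not_nil_iff.mp hnn
    have hyw : y = w := resolve hadj
    have hql : 2 ≤ q.length := by
      have := hc'.three_le_length
      rw [hq] at this
      simp only [Walk.length_cons] at this
      omega
    have hqrnn : ¬ q.reverse.Nil :=
      Walk.not_nil_iff_lt_length.mpr (by rw [Walk.length_reverse]; omega)
    obtain ⟨z, hadj2, r, hr⟩ := Walk.not_nil_iff.mp hqrnn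
    have hzw : z = w := resolve hadj2
    have hmem : s(u, y) ∈ q.edges := by
      have h2 : s(u, z) ∈ q.reverse.edges := by rw [hr]; exact List.mem_cons_self
      rw [Walk.edges_reverse, List.mem_reverse] at h2
      rwa [hzw, ← hyw] at h2
    have hnodup := hc'.isCircuit.isTrail.edges_nodup
    rw [hq, Walk.edges_cons] at hnodup
    exact (List.nodup_cons.mp hnodup).1 hmem
  · have hsub : ∀ e ∈ c.edges, e ∈ H.edgeSet := by
      intro e
      refine Sym2.ind (fun a b he => ?_) e
      rcases hH' a b (c.adj_of_mem_edges he) with h | h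
      · exact h
      · exfalso
        rcases Sym2.eq_iff.mp h with ⟨rfl, rfl⟩ | ⟨rfl, rfl⟩
        · exact hux (c.fst_mem_support_of_mem_edges he)
        · exact hux (c.snd_mem_support_of_mem_edges he)
    exact hH (c.transfer H hsub) (hc.transfer hsub)

lemma isAcyclic_spanningCoe_toSubgraph {a b : V} (p : G.Walk a b) (hp : p.IsPath) :
    p.toSubgraph.spanningCoe.IsAcyclic := by
  induction p with
  | nil =>
    intro x c hc
    have hnn : ¬ c.Nil :=
      Walk.not_nil_iff_lt_length.mpr (by have := hc.three_le_length; omega)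
    obtain ⟨y, hadj, q, hq⟩ := Walk.not_nil_iff.mp hnn
    simp [Subgraph.spanningCoe_adj, singletonSubgraph_adj] at hadj
  | @cons a a' b h p ih =>
    have hp' : p.IsPath := hp.of_cons
    have hnotmem : a ∉ p.support := ((Walk.cons_isPath_iff h p).mp hp).2
    refine acyclic_of_pendant (ih hp') h.ne ?_ ?_
    · intro x hx
      rw [Subgraph.spanningCoe_adj] at hx
      exact hnotmem ((Walk.mem_verts_toSubgraph p).mp hx.fst_mem)
    · intro x y hxy
      rw [Subgraph.spanningCoe_adj] at hxy
      have : (G.subgraphOfAdj h ⊔ p.toSubgraph).Adj x y := hxy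
      rw [Subgraph.sup_adj] at this
      rcases this with h1 | h2
      · right
        have h1' : a = x ∧ a' = y ∨ a = y ∧ a' = x := by simpa using h1
        rcases h1' with ⟨rfl, rfl⟩ | ⟨rfl, rfl⟩
        · rfl
        · exact Sym2.eq_swap
      · exact Or.inl (by rwa [Subgraph.spanningCoe_adj])

lemma path_unique_of_edges_subset {a b x y : V} {p : G.Walk a b} (hp : p.IsPath)
    (w₁ w₂ : G.Walk x y) (h₁ : w₁.IsPath) (h₂ : w₂.IsPath)
    (he₁ : ∀ e ∈ w₁.edges, e ∈ p.edges) (he₂ : ∀ e ∈ w₂.edges, e ∈ p.edges) : w₁ = w₂ := by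
  have hac := isAcyclic_spanningCoe_toSubgraph p hp
  have hs : ∀ (w : G.Walk x y), (∀ e ∈ w.edges, e ∈ p.edges) →
      ∀ e ∈ w.edges, e ∈ p.toSubgraph.spanningCoe.edgeSet := by
    intro w hw e he
    have h' := hw e he
    revert h'
    refine Sym2.ind (fun c d h' => ?_) e
    rw [mem_edgeSet, Subgraph.spanningCoe_adj, ← Subgraph.mem_edgeSet,
      Walk.mem_edges_toSubgraph]
    exact h'
  have key : (⟨w₁.transfer _ (hs w₁ he₁), h₁.transfer _⟩ : p.toSubgraph.spanningCoe.Path x y)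
      = ⟨w₂.transfer _ (hs w₂ he₂), h₂.transfer _⟩ := hac.path_unique _ _
  have keq : w₁.transfer _ (hs w₁ he₁) = w₂.transfer _ (hs w₂ he₂) := Subtype.ext_iff.mp key
  have hback : ∀ (w : G.Walk x y) (hw : ∀ e ∈ w.edges, e ∈ p.toSubgraph.spanningCoe.edgeSet),
      (w.transfer _ hw).map (Hom.ofLE p.toSubgraph.spanningCoe_le) = w := by
    intro w hw
    have h1 : ∀ e ∈ (w.transfer _ hw).edges, e ∈ G.edgeSet := by
      intro e he
      rw [Walk.edges_transfer] at he
      exact w.edges_subset_edgeSet he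
    rw [← Walk.transfer_eq_map_ofLE (w.transfer _ hw) h1 p.toSubgraph.spanningCoe_le, Walk.transfer_transfer]
    exact w.transfer_self
  calc w₁ = (w₁.transfer _ (hs w₁ he₁)).map
        (Hom.ofLE p.toSubgraph.spanningCoe_le) := (hback w₁ _).symm
    _ = (w₂.transfer _ (hs w₂ he₂)).map
        (Hom.ofLE p.toSubgraph.spanningCoe_le) := by rw [keq]
    _ = w₂ := hback w₂ _

lemma exists_path_between {a b v u : V} (p : G.Walk a b) (hp : p.IsPath)
    (hv : v ∈ p.support) (hu : u ∈ p.support) :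
    ∃ w : G.Walk v u, w.IsPath ∧ ∀ e ∈ w.edges, e ∈ p.edges := by
  rw [← Walk.take_spec p hv, Walk.mem_support_append_iff] at hu
  rcases hu with hu | hu
  · have hu' : u ∈ (p.takeUntil v hv).reverse.support := by
      rw [Walk.support_reverse, List.mem_reverse]; exact hu
    refine ⟨(p.takeUntil v hv).reverse.takeUntil u hu', ((hp.takeUntil hv).reverse).takeUntil hu', ?_⟩
    intro e he
    have h1 := Walk.edges_takeUntil_subset _ hu' he
    rw [Walk.edges_reverse, List.mem_reverse] at h1
    exact Walk.edges_takeUntil_subset p hv h1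
  · refine ⟨(p.dropUntil v hv).takeUntil u hu, (hp.dropUntil hv).takeUntil hu, ?_⟩
    intro e he
    exact Walk.edges_dropUntil_subset p hv (Walk.edges_takeUntil_subset _ hu he)

end Aux

/-- Let `P` be a set of non-crossing, pairwise single-touch shortest
paths in a plane graph `G`, and let `v` be a vertex of `G` (contained in at least one
path of `P`).  Then the union of all paths of `P` containing `v` is a tree. -/
theorem paths_through_vertex_form_tree (PG : PlaneGraph) (P : Set PG.WalkOn)
    (hshort : ∀ p ∈ P, PG.IsShortestPath p)
    (hst : ∀ p ∈ P, ∀ q ∈ P, PG.SingleTouch p q)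
    (hnc : ∀ p ∈ P, ∀ q ∈ P, ¬ PG.Crosses p q)
    (v : PG.V) (hv : ∃ p ∈ P, v ∈ p.2.2.support) :
    (⨆ p ∈ {p ∈ P | v ∈ p.2.2.support}, p.2.2.toSubgraph).coe.IsTree := by
  classical
  set S : Set PG.WalkOn := {p ∈ P | v ∈ p.2.2.support} with hS
  set H : PG.G.Subgraph := ⨆ p ∈ S, p.2.2.toSubgraph with hHdef
  have hpath : ∀ p ∈ S, p.2.2.IsPath := fun p hp => (hshort p hp.1).1
  have hHadj : ∀ x y : PG.V, H.Adj x y ↔ ∃ p ∈ S, s(x, y) ∈ p.2.2.edges := by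
    intro x y
    rw [hHdef]
    constructor
    · intro h
      obtain ⟨p, hp, hadj⟩ : ∃ p, ∃ _ : p ∈ S, p.2.2.toSubgraph.Adj x y := by
        simpa [Subgraph.iSup_adj] using h
      exact ⟨p, hp, (Walk.mem_edges_toSubgraph _).mp (Subgraph.mem_edgeSet.mpr hadj)⟩
    · rintro ⟨p, hp, he⟩
      have hadj : p.2.2.toSubgraph.Adj x y :=
        Subgraph.mem_edgeSet.mp ((Walk.mem_edges_toSubgraph _).mpr he)
      simp only [Subgraph.iSup_adj]
      exact ⟨p, hp, hadj⟩
  have hHverts : ∀ x : PG.V, x ∈ H.verts ↔ ∃ p ∈ S, x ∈ p.2.2.support := by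
    intro x
    rw [hHdef]
    simp [Subgraph.verts_iSup, Walk.mem_verts_toSubgraph]
  -- the single-touch property: a common path between two members of S
  have touch : ∀ p ∈ S, ∀ q ∈ S, ∀ u : PG.V, u ∈ p.2.2.support → u ∈ q.2.2.support →
      ∃ w : PG.G.Walk v u, w.IsPath ∧ (∀ e ∈ w.edges, e ∈ p.2.2.edges) ∧
        (∀ e ∈ w.edges, e ∈ q.2.2.edges) := by
    intro p hp q hq u hup huq
    rcases hst p hp.1 q hq.1 with hempty | ⟨a, b, I, hIpath, hIsub⟩
    · exfalso
      have : v ∈ (p.2.2.toSubgraph ⊓ q.2.2.toSubgraph).verts := by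
        rw [Subgraph.verts_inf]
        exact ⟨(Walk.mem_verts_toSubgraph _).mpr hp.2, (Walk.mem_verts_toSubgraph _).mpr hq.2⟩
      rw [hempty] at this
      exact this
    · have hmemI : ∀ x : PG.V, x ∈ p.2.2.support → x ∈ q.2.2.support → x ∈ I.support := by
        intro x h1 h2
        have : x ∈ I.toSubgraph.verts := by
          rw [hIsub, Subgraph.verts_inf]
          exact ⟨(Walk.mem_verts_toSubgraph _).mpr h1, (Walk.mem_verts_toSubgraph _).mpr h2⟩
        exact (Walk.mem_verts_toSubgraph _).mp this
      have hedgesI : ∀ e, e ∈ I.edges → e ∈ p.2.2.edges ∧ e ∈ q.2.2.edges := by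
        intro e he
        have : e ∈ I.toSubgraph.edgeSet := (Walk.mem_edges_toSubgraph _).mpr he
        rw [hIsub, Subgraph.edgeSet_inf] at this
        exact ⟨(Walk.mem_edges_toSubgraph _).mp this.1, (Walk.mem_edges_toSubgraph _).mp this.2⟩
      obtain ⟨w, hw1, hw2⟩ := exists_path_between I hIpath (hmemI v hp.2 hq.2) (hmemI u hup huq)
      exact ⟨w, hw1, fun e he => (hedgesI e (hw2 e he)).1, fun e he => (hedgesI e (hw2 e he)).2⟩
  -- the canonical path from v to each vertex of H
  have master : ∀ u : PG.V, (∃ p ∈ S, u ∈ p.2.2.support) →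
      ∃ w : PG.G.Walk v u, w.IsPath ∧
        (∀ p ∈ S, u ∈ p.2.2.support → ∀ e ∈ w.edges, e ∈ p.2.2.edges) := by
    rintro u ⟨p, hpS, hup⟩
    obtain ⟨w, hwpath, hwp⟩ := exists_path_between p.2.2 (hpath p hpS) hpS.2 hup
    refine ⟨w, hwpath, ?_⟩
    intro q hqS huq
    obtain ⟨w', h'path, h'p, h'q⟩ := touch p hpS q hqS u hup huq
    have hww : w = w' :=
      path_unique_of_edges_subset (hpath p hpS) w w' hwpath h'path hwp h'p
    rw [hww]
    exact h'q
  choose W hWpath hWedges using master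
  -- uniqueness of the canonical path
  have Wuniq : ∀ (u : PG.V) (h : ∃ p ∈ S, u ∈ p.2.2.support) (q : PG.WalkOn) (hq : q ∈ S)
      (w' : PG.G.Walk v u), w'.IsPath → (∀ e ∈ w'.edges, e ∈ q.2.2.edges) → w' = W u h := by
    intro u h q hq w' h'path h'sub
    have huq : u ∈ q.2.2.support := by
      by_cases hn : w'.Nil
      · have : v = u := hn.eq
        rw [← this]
        exact hq.2
      · have hnr : ¬ w'.reverse.Nil :=
          Walk.not_nil_iff_lt_length.mpr
            (by rw [Walk.length_reverse]; exact Walk.not_nil_iff_lt_length.mp hn)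
        obtain ⟨z, hadj, r, hr⟩ := Walk.not_nil_iff.mp hnr
        have : s(u, z) ∈ w'.edges := by
          have h2 : s(u, z) ∈ w'.reverse.edges := by rw [hr]; exact List.mem_cons_self
          rwa [Walk.edges_reverse, List.mem_reverse] at h2
        exact q.2.2.fst_mem_support_of_mem_edges (h'sub _ this)
    exact path_unique_of_edges_subset (hpath q hq) w' (W u h) h'path (hWpath u h) h'sub
      (hWedges u h q hq huq)
  -- the step lemma: along every edge of H, the canonical paths differ by exactly one edge
  have step : ∀ (x y : PG.V) (hx : ∃ p ∈ S, x ∈ p.2.2.support)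
      (hy : ∃ p ∈ S, y ∈ p.2.2.support), (∃ p ∈ S, s(x, y) ∈ p.2.2.edges) →
      (∃ h : PG.G.Adj x y, W y hy = (W x hx).concat h) ∨
      (∃ h : PG.G.Adj y x, W x hx = (W y hy).concat h) := by
    rintro x y hx hy ⟨p, hpS, he⟩
    have hadj : PG.G.Adj x y := p.2.2.adj_of_mem_edges he
    have hxp : x ∈ p.2.2.support := p.2.2.fst_mem_support_of_mem_edges he
    have hyp : y ∈ p.2.2.support := p.2.2.snd_mem_support_of_mem_edges he
    by_cases hyx : y ∈ (W x hx).support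
    · right
      refine ⟨hadj.symm, ?_⟩
      have h1 : (W x hx).takeUntil y hyx = W y hy :=
        Wuniq y hy p hpS _ ((hWpath x hx).takeUntil hyx)
          (fun e he' => hWedges x hx p hpS hxp e (Walk.edges_takeUntil_subset _ hyx he'))
      have hxny : x ∉ (W y hy).support := by
        rw [← h1]
        exact end_not_mem_takeUntil (hWpath x hx) hyx (Ne.symm hadj.ne)
      refine (Wuniq x hx p hpS ((W y hy).concat hadj.symm) ?_ ?_).symm
      · rw [← Walk.isPath_reverse_iff, Walk.reverse_concat]
        refine Walk.IsPath.cons ((hWpath y hy).reverse) ?_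
        rw [Walk.support_reverse, List.mem_reverse]
        exact hxny
      · intro e he'
        rw [Walk.edges_concat, List.concat_eq_append, List.mem_append] at he'
        rcases he' with he' | he'
        · exact hWedges y hy p hpS hyp e he'
        · rw [List.mem_singleton] at he'
          rw [he', Sym2.eq_swap]
          exact he
    · left
      refine ⟨hadj, ?_⟩
      refine (Wuniq y hy p hpS ((W x hx).concat hadj) ?_ ?_).symm
      · rw [← Walk.isPath_reverse_iff, Walk.reverse_concat]
        refine Walk.IsPath.cons ((hWpath x hx).reverse) ?_
        rw [Walk.support_reverse, List.mem_reverse]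
        exact hyx
      · intro e he'
        rw [Walk.edges_concat, List.concat_eq_append, List.mem_append] at he'
        rcases he' with he' | he'
        · exact hWedges x hx p hpS hxp e he'
        · rw [List.mem_singleton] at he'
          rw [he']
          exact he
  -- the height function
  set len : PG.V → ℕ :=
    fun u => if h : ∃ p ∈ S, u ∈ p.2.2.support then (W u h).length else 0 with hlen
  have hlen_eq : ∀ (u : PG.V) (h : ∃ p ∈ S, u ∈ p.2.2.support), len u = (W u h).length := by
    intro u h
    rw [hlen]
    exact dif_pos h
  -- acyclicity of the spanning coercion
  have hacyc : H.spanningCoe.IsAcyclic := by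
    intro x c hc
    obtain ⟨m, hmF, hmax⟩ := Finset.exists_max_image c.support.toFinset len
      ⟨x, List.mem_toFinset.mpr c.start_mem_support⟩
    have hm : m ∈ c.support := List.mem_toFinset.mp hmF
    have hc' := hc.rotate hm
    set c' := c.rotate m hm with hc'def
    have hmax' : ∀ b, b ∈ c'.support → len b ≤ len m := by
      intro b hb
      rw [Walk.support_eq_cons] at hb
      rcases List.mem_cons.mp hb with rfl | hb
      · exact le_refl _
      · have hb' : b ∈ c.support.tail := (Walk.support_rotate c m hm).mem_iff.mp hb
        refine hmax b (List.mem_toFinset.mpr ?_)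
        rw [Walk.support_eq_cons]
        exact List.mem_cons_of_mem _ hb'
    have hnn : ¬ c'.Nil :=
      Walk.not_nil_iff_lt_length.mpr (by have := hc'.three_le_length; omega)
    obtain ⟨y₁, ha1, q, hq⟩ := Walk.not_nil_iff.mp hnn
    rw [Subgraph.spanningCoe_adj] at ha1
    have hE1 := (hHadj m y₁).mp ha1
    have hql : 2 ≤ q.length := by
      have := hc'.three_le_length
      rw [hq] at this
      simp only [Walk.length_cons] at this
      omega
    have hqrnn : ¬ q.reverse.Nil :=
      Walk.not_nil_iff_lt_length.mpr (by rw [Walk.length_reverse]; omega)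
    obtain ⟨y₂, ha2, r, hr⟩ := Walk.not_nil_iff.mp hqrnn
    rw [Subgraph.spanningCoe_adj] at ha2
    have hE2 := (hHadj m y₂).mp ha2
    have hmm : ∃ p ∈ S, m ∈ p.2.2.support := by
      obtain ⟨p, hp, he⟩ := hE1
      exact ⟨p, hp, p.2.2.fst_mem_support_of_mem_edges he⟩
    have hy1m : ∃ p ∈ S, y₁ ∈ p.2.2.support := by
      obtain ⟨p, hp, he⟩ := hE1
      exact ⟨p, hp, p.2.2.snd_mem_support_of_mem_edges he⟩
    have hy2m : ∃ p ∈ S, y₂ ∈ p.2.2.support := by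
      obtain ⟨p, hp, he⟩ := hE2
      exact ⟨p, hp, p.2.2.snd_mem_support_of_mem_edges he⟩
    have hy1s : y₁ ∈ c'.support := by
      rw [hq, Walk.support_cons]
      exact List.mem_cons_of_mem _ q.start_mem_support
    have hy2q : y₂ ∈ q.support := by
      have : y₂ ∈ q.reverse.support := by
        rw [hr, Walk.support_cons]
        exact List.mem_cons_of_mem _ r.start_mem_support
      rwa [Walk.support_reverse, List.mem_reverse] at this
    have hy2s : y₂ ∈ c'.support := by
      rw [hq, Walk.support_cons]
      exact List.mem_cons_of_mem _ hy2q
    rcases step m y₁ hmm hy1m hE1 with ⟨h₁, heq1⟩ | ⟨h₁, heq1⟩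
    · have hle := hmax' y₁ hy1s
      rw [hlen_eq y₁ hy1m, hlen_eq m hmm, heq1, Walk.length_concat] at hle
      omega
    · rcases step m y₂ hmm hy2m hE2 with ⟨h₂, heq2⟩ | ⟨h₂, heq2⟩
      · have hle := hmax' y₂ hy2s
        rw [hlen_eq y₂ hy2m, hlen_eq m hmm, heq2, Walk.length_concat] at hle
        omega
      · obtain ⟨h12, -⟩ := Walk.concat_inj (heq1.symm.trans heq2)
        have hmem : s(m, y₁) ∈ q.edges := by
          have h2 : s(m, y₂) ∈ q.reverse.edges := by
            rw [hr]; exact List.mem_cons_self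
          rw [Walk.edges_reverse, List.mem_reverse] at h2
          rwa [← h12] at h2
        have hnodup := hc'.isCircuit.isTrail.edges_nodup
        rw [hq, Walk.edges_cons] at hnodup
        exact (List.nodup_cons.mp hnodup).1 hmem
  -- transfer acyclicity to the coercion
  have hcoeacyc : H.coe.IsAcyclic := by
    intro x c hcyc
    have hmap := (Walk.map_isCycle_iff_of_injective
      (f := (⟨Subtype.val, fun {a b} h => h⟩ : H.coe →g H.spanningCoe))
      (Subtype.val_injective)).mpr hcyc
    exact hacyc _ hmap
  -- connectivity
  obtain ⟨p₀, hp₀P, hvp₀⟩ := hv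
  have hp₀S : p₀ ∈ S := ⟨hp₀P, hvp₀⟩
  have hvH : v ∈ H.verts := (hHverts v).mpr ⟨p₀, hp₀S, hvp₀⟩
  have hconn : H.coe.Connected := by
    rw [connected_iff_exists_forall_reachable]
    refine ⟨⟨v, hvH⟩, ?_⟩
    rintro ⟨u, hu⟩
    obtain ⟨p, hpS, hup⟩ := (hHverts u).mp hu
    have hle' : p.2.2.toSubgraph ≤ H := by
      rw [hHdef]
      exact le_iSup₂ (f := fun (p : PG.WalkOn) (_ : p ∈ S) => p.2.2.toSubgraph) p hpS
    have hr := p.2.2.toSubgraph_connected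
      ⟨v, (Walk.mem_verts_toSubgraph _).mpr hpS.2⟩ ⟨u, (Walk.mem_verts_toSubgraph _).mpr hup⟩
    exact hr.map (Subgraph.inclusion hle')
  exact ⟨hconn, hcoeacyc⟩
end
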